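/- There is a universal constant c > 0 such that for every dimension d ≥ 2, every horizon K with K ≥ 1.5·d² and dK ≥ 3, every variance level σ ∈ (0,1], and every deterministic algorithm π for the K-round hypercube instance, with the weight vector μ drawn uniformly from {−Δ,Δ}^d (Δ = 1/√(96K)), the probability (over μ and the rewards) that Regret(K) ≥ d·√(K·σ²)/(16·√6) is at least c/log(dK). -/

import Mathlib

/-!
The regret is `2σΔ` times the number `m` of (round, coordinate) pairs in which the played action
disagrees with the sign pattern of `μ`. Flipping the `i`-th sign of `μ` changes each Bernoulli
parameter by `2Δ`, so the Bhattacharyya coefficient of the two trajectory laws is at least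
`(1 - 3Δ²)^K ≥ 1 - 3KΔ² = 31/32`, and by Cauchy–Schwarz their overlap `∑ min` is at least
`(31/32)²/2`. The mismatches in coordinate `i` under the two instances add up to `K`, so pairing
the instances (Assouad) gives `𝔼 m ≥ (961/4096)·dK`. Since `m ≤ dK` and the regret threshold is
exactly `2σΔ · dK/8`, the probability that `m ≥ dK/8` is at least `961/4096 - 1/8 > 1/10`, and
`1/10 ≥ (1/10)/log(dK)` because `dK ≥ 3 > e`.
-/

open Finset

namespace HypercubeBandit2

/-- An element of the hypercube `{−1,1}^d`, encoded by its sign pattern. -/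
abbrev Act (d : ℕ) := Fin d → Bool

/-- The real vector in `{−1,1}^d ⊆ ℝ^d` encoded by a sign pattern. -/
noncomputable def embed {d : ℕ} (a : Act d) : Fin d → ℝ := fun i => if a i then 1 else -1

/-- The weight vector in `{−Δ,Δ}^d ⊆ ℝ^d` encoded by a sign pattern. -/
noncomputable def wvec {d : ℕ} (Δ : ℝ) (μ : Act d) : Fin d → ℝ := fun i => if μ i then Δ else -Δ

/-- The standard inner product on `ℝ^d`. -/
noncomputable def ip {d : ℕ} (v w : Fin d → ℝ) : ℝ := ∑ i, v i * w i

/-- A deterministic algorithm: a map choosing, from the history of past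
(action, reward) pairs, the next action of the hypercube (the round index is
encoded by the length of the history). -/
def Alg (d : ℕ) := List ((Fin d → ℝ) × ℝ) → Act d

/-- The history of (action, reward) pairs after `k` rounds, given the Bernoulli
outcomes `ω`: in round `k` the reward is `σ · B` with `B = ω k ∈ {0,1}`. -/
noncomputable def hist {d : ℕ} (π : Alg d) (σ : ℝ) (ω : ℕ → Bool) :
    ℕ → List ((Fin d → ℝ) × ℝ)
  | 0 => []
  | k + 1 =>
      hist π σ ω k ++ [(embed (π (hist π σ ω k)), σ * (if ω k then 1 else 0))]

/-- The action selected by the algorithm in round `k`. -/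
noncomputable def act {d : ℕ} (π : Alg d) (σ : ℝ) (ω : ℕ → Bool) (k : ℕ) : Act d :=
  π (hist π σ ω k)

/-- The Bernoulli success probability of action `a`: `1/3 + ⟨μ, a⟩`. -/
noncomputable def bp {d : ℕ} (Δ : ℝ) (μ a : Act d) : ℝ :=
  1 / 3 + ip (wvec Δ μ) (embed a)

/-- Extension of a finite outcome sequence to `ℕ`. -/
def ext {K : ℕ} (ω : Fin K → Bool) : ℕ → Bool :=
  fun j => if h : j < K then ω ⟨j, h⟩ else false

/-- The probability of the trajectory determined by the Bernoulli outcomes `ω`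
(rewards are drawn independently across rounds given the chosen actions). -/
noncomputable def trajP (d K : ℕ) (Δ σ : ℝ) (π : Alg d) (μ : Act d)
    (ω : Fin K → Bool) : ℝ :=
  ∏ k : Fin K,
    (if ω k then bp Δ μ (act π σ (ext ω) k)
     else 1 - bp Δ μ (act π σ (ext ω) k))

/-- The maximal mean `max_{a ∈ {−1,1}^d} ⟨μ, a⟩`. -/
noncomputable def maxRew (d : ℕ) (Δ : ℝ) (μ : Act d) : ℝ :=
  Finset.univ.sup' Finset.univ_nonempty (fun a : Act d => ip (wvec Δ μ) (embed a))

/-- The pseudo-regret `∑_{k=1}^K σ·(max_{a∈𝒜} ⟨μ,a⟩ − ⟨μ, a_k⟩)`. -/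
noncomputable def regret (d K : ℕ) (Δ σ : ℝ) (π : Alg d) (μ : Act d)
    (ω : Fin K → Bool) : ℝ :=
  ∑ k : Fin K, σ * (maxRew d Δ μ - ip (wvec Δ μ) (embed (act π σ (ext ω) k)))

/-- The Bayes expected pseudo-regret: `μ` is uniform on `{−Δ,Δ}^d` with
`Δ = 1/√(96K)`, and the rewards follow scaled Bernoulli distributions
`σ·B(1/3 + ⟨μ,a⟩)`. -/
noncomputable def bayesRegret (d K : ℕ) (σ : ℝ) (π : Alg d) : ℝ :=
  (1 / 2 ^ d) * ∑ μ : Act d, ∑ ω : Fin K → Bool,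
    trajP d K (1 / Real.sqrt (96 * K)) σ π μ ω *
      regret d K (1 / Real.sqrt (96 * K)) σ π μ ω


/-- The probability (over the uniform draw of `μ ∈ {−Δ,Δ}^d` and the rewards)
that the pseudo-regret over `K` rounds is at least `t`. -/
noncomputable def probRegretGe (d K : ℕ) (σ t : ℝ) (π : Alg d) : ℝ :=
  (1 / 2 ^ d) * ∑ μ : Act d, ∑ ω : Fin K → Bool,
    (if t ≤ regret d K (1 / Real.sqrt (96 * K)) σ π μ ω
     then trajP d K (1 / Real.sqrt (96 * K)) σ π μ ω else 0)

def IsNonanticipating (f : ℕ → (ℕ → Bool) → ℝ) : Prop :=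
  ∀ k (ω ω' : ℕ → Bool), (∀ j ≤ k, ω j = ω' j) → f k ω = f k ω'

lemma ext_snoc {K : ℕ} (ω : Fin K → Bool) (b : Bool) :
    ext (Fin.snoc ω b : Fin (K + 1) → Bool) = Function.update (ext ω) K b := by
  funext j
  rcases lt_trichotomy j K with hj | rfl | hj
  · rw [Function.update_of_ne hj.ne]
    simp only [ext, dif_pos hj, dif_pos (hj.trans (Nat.lt_succ_self K))]
    exact Fin.snoc_castSucc (α := fun _ => Bool) (i := ⟨j, hj⟩) ..
  · simp only [ext, Function.update_self, dif_pos (Nat.lt_succ_self j)]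
    exact Fin.snoc_last (α := fun _ => Bool) ..
  · rw [Function.update_of_ne hj.ne']
    simp only [ext, dif_neg (by omega : ¬ j < K + 1), dif_neg hj.not_gt]

lemma sum_prod_ext_succ {f : ℕ → (ℕ → Bool) → ℝ} (hf : IsNonanticipating f) (K : ℕ) :
    ∑ ω : Fin (K + 1) → Bool, ∏ k : Fin (K + 1), f k (ext ω) =
      ∑ ω : Fin K → Bool, (∏ k : Fin K, f k (ext ω)) *
        (f K (Function.update (ext ω) K true) + f K (Function.update (ext ω) K false)) := by
  rw [← (Fin.snocEquiv fun _ => Bool).sum_comp, Fintype.sum_prod_type, Finset.sum_comm]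
  refine Finset.sum_congr rfl fun ω _ => ?_
  rw [Fintype.sum_bool, mul_add]
  congr 1 <;>
  · show ∏ k : Fin (K + 1), f k (ext (Fin.snoc ω _ : Fin (K + 1) → Bool)) = _
    rw [ext_snoc, Fin.prod_univ_castSucc, Fin.val_last]
    congr 1
    refine Finset.prod_congr rfl fun k _ => hf k _ _ fun j hj => ?_
    exact Function.update_of_ne (by have := k.isLt; omega) _ _

lemma pow_le_sum_prod_ext {f : ℕ → (ℕ → Bool) → ℝ} {c : ℝ} (hf : IsNonanticipating f)
    (hf₀ : ∀ k ω, 0 ≤ f k ω) (hc : 0 ≤ c)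
    (hstep : ∀ k ω, c ≤ f k (Function.update ω k true) + f k (Function.update ω k false))
    (K : ℕ) : c ^ K ≤ ∑ ω : Fin K → Bool, ∏ k : Fin K, f k (ext ω) := by
  induction K with
  | zero => simp
  | succ K ih =>
    rw [sum_prod_ext_succ hf, pow_succ]
    calc c ^ K * c ≤ (∑ ω : Fin K → Bool, ∏ k : Fin K, f k (ext ω)) * c := by gcongr
      _ ≤ _ := by
        rw [Finset.sum_mul]
        gcongr with ω
        · exact Finset.prod_nonneg fun k _ => hf₀ _ _
        · exact hstep _ _

lemma sum_prod_ext_eq_one {f : ℕ → (ℕ → Bool) → ℝ} (hf : IsNonanticipating f)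
    (hstep : ∀ k ω, f k (Function.update ω k true) + f k (Function.update ω k false) = 1)
    (K : ℕ) : ∑ ω : Fin K → Bool, ∏ k : Fin K, f k (ext ω) = 1 := by
  induction K with
  | zero => simp
  | succ K ih => simp only [sum_prod_ext_succ hf, hstep, mul_one, ih]

lemma sq_sqrt_sub_sqrt_mul_le {a b m : ℝ} (hm : 0 ≤ m) (ha : m ≤ a) (hb : m ≤ b) :
    (√a - √b) ^ 2 * (4 * m) ≤ (a - b) ^ 2 := by
  have hsa := Real.sqrt_le_sqrt ha
  have hsb := Real.sqrt_le_sqrt hb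
  have hsm := Real.sqrt_nonneg m
  have hsum : 4 * m ≤ (√a + √b) ^ 2 := by nlinarith [Real.sq_sqrt hm]
  have hfactor : a - b = (√a - √b) * (√a + √b) := by
    nlinarith [Real.sq_sqrt (hm.trans ha), Real.sq_sqrt (hm.trans hb)]
  rw [hfactor, mul_pow]
  exact mul_le_mul_of_nonneg_left hsum (sq_nonneg _)

lemma bhattacharyya_bernoulli_ge {p q : ℝ} (hp : p ∈ Set.Icc (1 / 4 : ℝ) (5 / 12))
    (hq : q ∈ Set.Icc (1 / 4 : ℝ) (5 / 12)) :
    1 - 3 / 4 * (p - q) ^ 2 ≤ √(p * q) + √((1 - p) * (1 - q)) := by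
  obtain ⟨hp₁, hp₂⟩ := hp
  obtain ⟨hq₁, hq₂⟩ := hq
  have hsucc := sq_sqrt_sub_sqrt_mul_le (by norm_num) hp₁ hq₁
  have hfail := sq_sqrt_sub_sqrt_mul_le (m := 7 / 12) (by norm_num)
    (by linarith : 7 / 12 ≤ 1 - p) (by linarith : 7 / 12 ≤ 1 - q)
  -- Hellinger: `√(pq) + √((1-p)(1-q)) = 1 - ((√p - √q)² + (√(1-p) - √(1-q))²) / 2`
  rw [Real.sqrt_mul (by linarith), Real.sqrt_mul (by linarith)]
  nlinarith [Real.sq_sqrt (by linarith : 0 ≤ p), Real.sq_sqrt (by linarith : 0 ≤ q),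
    Real.sq_sqrt (by linarith : 0 ≤ 1 - p), Real.sq_sqrt (by linarith : 0 ≤ 1 - q)]

lemma sq_sum_sqrt_mul_le_sum_min_mul {ι : Type*} [Fintype ι] {P Q : ι → ℝ}
    (hP : ∀ x, 0 ≤ P x) (hQ : ∀ x, 0 ≤ Q x) :
    (∑ x, √(P x * Q x)) ^ 2 ≤ (∑ x, min (P x) (Q x)) * ∑ x, (P x + Q x) := by
  refine Finset.sum_sq_le_sum_mul_sum_of_sq_le_mul _ (fun x _ => le_min (hP x) (hQ x))
    (fun x _ => add_nonneg (hP x) (hQ x)) fun x _ => ?_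
  rw [Real.sq_sqrt (mul_nonneg (hP x) (hQ x)), ← min_mul_max]
  exact mul_le_mul_of_nonneg_left (max_le_add_of_nonneg (hP x) (hQ x)) (le_min (hP x) (hQ x))

/-- Assouad's two-point argument: as `M μ + M (τ μ) = K`, on the common mass of `P μ` and
`P (τ μ)` one of the two instances pays at least `K`. -/
lemma card_mul_le_two_mul_sum_mul_of_involutive {α Ω : Type*} [Fintype α] [Fintype Ω]
    {τ : α → α} (hτ : Function.Involutive τ) {P M : α → Ω → ℝ} {β K : ℝ} (hK : 0 ≤ K)
    (hM : ∀ μ ω, 0 ≤ M μ ω) (hMK : ∀ μ ω, M μ ω + M (τ μ) ω = K)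
    (hβ : ∀ μ, β ≤ ∑ ω, min (P μ ω) (P (τ μ) ω)) :
    Fintype.card α * (β * K) ≤ 2 * ∑ μ, ∑ ω, P μ ω * M μ ω := by
  have hpair : ∀ μ, β * K ≤ ∑ ω, (P μ ω * M μ ω + P (τ μ) ω * M (τ μ) ω) := fun μ =>
    calc β * K ≤ ∑ ω, min (P μ ω) (P (τ μ) ω) * K := by
          rw [← Finset.sum_mul]; exact mul_le_mul_of_nonneg_right (hβ μ) hK
      _ ≤ _ := Finset.sum_le_sum fun ω _ => by
          rw [← hMK μ ω, mul_add]
          exact add_le_add (mul_le_mul_of_nonneg_right (min_le_left _ _) (hM _ _))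
            (mul_le_mul_of_nonneg_right (min_le_right _ _) (hM _ _))
  have hswap : ∑ μ, ∑ ω, P (τ μ) ω * M (τ μ) ω = ∑ μ, ∑ ω, P μ ω * M μ ω :=
    Equiv.sum_comp (hτ.toPerm τ) fun μ => ∑ ω, P μ ω * M μ ω
  calc Fintype.card α * (β * K) = ∑ _μ : α, β * K := by simp
    _ ≤ ∑ μ, ∑ ω, (P μ ω * M μ ω + P (τ μ) ω * M (τ μ) ω) :=
      Finset.sum_le_sum fun μ _ => hpair μ
    _ = 2 * ∑ μ, ∑ ω, P μ ω * M μ ω := by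
      simp only [Finset.sum_add_distrib, hswap]; ring

lemma sum_mul_le_mul_sum_ite_add {ι : Type*} [Fintype ι] {w X : ι → ℝ} {B θ : ℝ} (hθ : 0 ≤ θ)
    (hw : ∀ x, 0 ≤ w x) (hX : ∀ x, X x ≤ B) :
    ∑ x, w x * X x ≤ B * ∑ x, (if θ ≤ X x then w x else 0) + θ * ∑ x, w x := by
  rw [Finset.mul_sum, Finset.mul_sum, ← Finset.sum_add_distrib]
  refine Finset.sum_le_sum fun x _ => ?_
  split_ifs with h
  · nlinarith [hw x, hX x, mul_nonneg hθ (hw x)]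
  · nlinarith [hw x]

def flipAt {d : ℕ} (i : Fin d) (μ : Act d) : Act d := Function.update μ i (!μ i)

lemma flipAt_involutive {d : ℕ} (i : Fin d) : Function.Involutive (flipAt i) := fun μ => by
  funext j
  by_cases h : j = i
  · subst h; simp [flipAt]
  · simp [flipAt, Function.update_of_ne h]

lemma ip_wvec_embed {d : ℕ} (Δ : ℝ) (μ a : Act d) :
    ip (wvec Δ μ) (embed a) = Δ * (d - 2 * hammingDist a μ) := by
  have hterm : ∀ i, wvec Δ μ i * embed a i = Δ * (1 - 2 * if a i ≠ μ i then 1 else 0) := by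
    intro i
    cases hμ : μ i <;> cases ha : a i <;> simp [wvec, embed, hμ, ha] <;> ring
  simp only [ip, hterm, ← Finset.mul_sum, Finset.sum_sub_distrib, hammingDist,
    Finset.card_filter]
  push_cast
  simp [Finset.mul_sum]

lemma maxRew_eq {d : ℕ} {Δ : ℝ} (hΔ : 0 ≤ Δ) (μ : Act d) : maxRew d Δ μ = d * Δ := by
  refine le_antisymm (Finset.sup'_le _ _ fun a _ => ?_) ?_
  · rw [ip_wvec_embed]
    nlinarith [(hammingDist a μ).cast_nonneg (α := ℝ)]
  · calc (d : ℝ) * Δ = ip (wvec Δ μ) (embed μ) := by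
          rw [ip_wvec_embed, hammingDist_self, Nat.cast_zero]; ring
      _ ≤ maxRew d Δ μ := Finset.le_sup' (fun a : Act d => ip (wvec Δ μ) (embed a)) (mem_univ μ)

lemma three_mul_sq_le_one {d : ℕ} {Δ : ℝ} (hd : 0 < d) (hΔ : 0 ≤ Δ) (hdΔ : d * Δ ≤ 1 / 12) :
    3 * Δ ^ 2 ≤ 1 := by
  have : (1 : ℝ) ≤ d := by exact_mod_cast hd
  nlinarith

lemma bp_mem_Icc {d : ℕ} {Δ : ℝ} (hΔ : 0 ≤ Δ) (hdΔ : d * Δ ≤ 1 / 12) (μ a : Act d) :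
    bp Δ μ a ∈ Set.Icc (1 / 4 : ℝ) (5 / 12) := by
  have hdist : (hammingDist a μ : ℝ) ≤ d := by
    exact_mod_cast (hammingDist_le_card_fintype.trans_eq (Fintype.card_fin d))
  rw [bp, ip_wvec_embed]
  constructor <;> nlinarith [(hammingDist a μ).cast_nonneg (α := ℝ)]

lemma sq_bp_sub_bp_flipAt {d : ℕ} (Δ : ℝ) (i : Fin d) (μ a : Act d) :
    (bp Δ μ a - bp Δ (flipAt i μ) a) ^ 2 = 4 * Δ ^ 2 := by
  have hdiff : bp Δ μ a - bp Δ (flipAt i μ) a =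
      (wvec Δ μ i - wvec Δ (flipAt i μ) i) * embed a i := by
    simp only [bp, ip, add_sub_add_left_eq_sub, ← Finset.sum_sub_distrib, ← sub_mul]
    refine Finset.sum_eq_single i (fun j _ hj => ?_) (by simp)
    simp [wvec, flipAt, Function.update_of_ne hj]
  rw [hdiff]
  cases hμ : μ i <;> cases ha : a i <;> simp [wvec, embed, flipAt, hμ, ha] <;> ring

section History

variable {d : ℕ} {σ : ℝ} (π : Alg d)

lemma hist_congr {ω ω' : ℕ → Bool} {k : ℕ} (h : ∀ j < k, ω j = ω' j) :
    hist π σ ω k = hist π σ ω' k := by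
  induction k with
  | zero => rfl
  | succ k ih =>
    simp only [hist, ih fun j hj => h j (Nat.lt_succ_of_lt hj), h k (Nat.lt_succ_self k)]

lemma act_congr {ω ω' : ℕ → Bool} {k : ℕ} (h : ∀ j < k, ω j = ω' j) :
    act π σ ω k = act π σ ω' k :=
  congrArg π (hist_congr π h)

lemma act_update_self (ω : ℕ → Bool) (k : ℕ) (b : Bool) :
    act π σ (Function.update ω k b) k = act π σ ω k :=
  act_congr π fun _ hj => Function.update_of_ne hj.ne _ _

end History

/-- The conditional probability of the outcome `ω k` of round `k` given the earlier ones. -/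
noncomputable def roundProb {d : ℕ} (π : Alg d) (Δ σ : ℝ) (μ : Act d) (k : ℕ)
    (ω : ℕ → Bool) : ℝ :=
  if ω k then bp Δ μ (act π σ ω k) else 1 - bp Δ μ (act π σ ω k)

section Trajectory

variable {d : ℕ} {Δ σ : ℝ} (π : Alg d)

lemma roundProb_isNonanticipating (μ : Act d) : IsNonanticipating (roundProb π Δ σ μ) :=
  fun k _ _ h => by
    simp only [roundProb, act_congr π fun j hj => h j hj.le, h k le_rfl]

lemma roundProb_update_self (μ : Act d) (ω : ℕ → Bool) (k : ℕ) (b : Bool) :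
    roundProb π Δ σ μ k (Function.update ω k b) =
      if b then bp Δ μ (act π σ ω k) else 1 - bp Δ μ (act π σ ω k) := by
  simp only [roundProb, Function.update_self, act_update_self]

lemma roundProb_nonneg (hΔ : 0 ≤ Δ) (hdΔ : d * Δ ≤ 1 / 12) (μ : Act d) (k : ℕ)
    (ω : ℕ → Bool) : 0 ≤ roundProb π Δ σ μ k ω := by
  have ⟨h₁, h₂⟩ := bp_mem_Icc hΔ hdΔ μ (act π σ ω k)
  unfold roundProb
  split_ifs <;> linarith

lemma trajP_eq_prod {K : ℕ} (μ : Act d) (ω : Fin K → Bool) :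
    trajP d K Δ σ π μ ω = ∏ k : Fin K, roundProb π Δ σ μ k (ext ω) := by
  refine Finset.prod_congr rfl fun k _ => ?_
  simp only [roundProb, ext, dif_pos k.isLt]

lemma sum_trajP (K : ℕ) (μ : Act d) : ∑ ω : Fin K → Bool, trajP d K Δ σ π μ ω = 1 := by
  simp only [trajP_eq_prod]
  refine sum_prod_ext_eq_one (roundProb_isNonanticipating π μ) (fun k ω => ?_) K
  simp only [roundProb_update_self, if_true, Bool.false_eq_true, if_false, add_sub_cancel]

lemma trajP_nonneg {K : ℕ} (hΔ : 0 ≤ Δ) (hdΔ : d * Δ ≤ 1 / 12) (μ : Act d)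
    (ω : Fin K → Bool) : 0 ≤ trajP d K Δ σ π μ ω := by
  rw [trajP_eq_prod]
  exact Finset.prod_nonneg fun k _ => roundProb_nonneg π hΔ hdΔ μ k _

lemma pow_le_sum_sqrt_trajP_mul_trajP_flipAt {K : ℕ} (hΔ : 0 ≤ Δ) (hdΔ : d * Δ ≤ 1 / 12)
    (i : Fin d) (μ : Act d) :
    (1 - 3 * Δ ^ 2) ^ K ≤
      ∑ ω : Fin K → Bool, √(trajP d K Δ σ π μ ω * trajP d K Δ σ π (flipAt i μ) ω) := by
  set g : ℕ → (ℕ → Bool) → ℝ :=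
    fun k ω => √(roundProb π Δ σ μ k ω * roundProb π Δ σ (flipAt i μ) k ω)
  have hg : IsNonanticipating g := fun k ω ω' h => by
    simp only [g, roundProb_isNonanticipating π μ k ω ω' h,
      roundProb_isNonanticipating π (flipAt i μ) k ω ω' h]
  have hstep : ∀ k ω, 1 - 3 * Δ ^ 2 ≤
      g k (Function.update ω k true) + g k (Function.update ω k false) := fun k ω => by
    have hbc := bhattacharyya_bernoulli_ge (bp_mem_Icc hΔ hdΔ μ (act π σ ω k))
      (bp_mem_Icc hΔ hdΔ (flipAt i μ) (act π σ ω k))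
    rw [sq_bp_sub_bp_flipAt] at hbc
    simp only [g, roundProb_update_self, if_true, Bool.false_eq_true, if_false]
    linarith
  have hsqrt : ∀ ω : Fin K → Bool,
      √(trajP d K Δ σ π μ ω * trajP d K Δ σ π (flipAt i μ) ω) = ∏ k : Fin K, g k (ext ω) := by
    intro ω
    rw [trajP_eq_prod, trajP_eq_prod, ← Finset.prod_mul_distrib, Real.sqrt_prod]
    exact fun k _ =>
      mul_nonneg (roundProb_nonneg π hΔ hdΔ _ _ _) (roundProb_nonneg π hΔ hdΔ _ _ _)
  simp only [hsqrt]
  exact pow_le_sum_prod_ext hg (fun _ _ => Real.sqrt_nonneg _)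
    (by linarith [three_mul_sq_le_one i.pos hΔ hdΔ]) hstep K

end Trajectory

noncomputable def coordMismatches {d K : ℕ} (π : Alg d) (σ : ℝ) (i : Fin d) (μ : Act d)
    (ω : Fin K → Bool) : ℝ :=
  ∑ k : Fin K, if act π σ (ext ω) k i ≠ μ i then 1 else 0

section Regret

variable {d K : ℕ} {Δ σ : ℝ} (π : Alg d)

lemma coordMismatches_nonneg (i : Fin d) (μ : Act d) (ω : Fin K → Bool) :
    0 ≤ coordMismatches π σ i μ ω :=
  Finset.sum_nonneg fun _ _ => by positivity

lemma coordMismatches_add_flipAt (i : Fin d) (μ : Act d) (ω : Fin K → Bool) :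
    coordMismatches π σ i μ ω + coordMismatches π σ i (flipAt i μ) ω = K := by
  rw [coordMismatches, coordMismatches, ← Finset.sum_add_distrib]
  have hone : ∀ k : Fin K, ((if act π σ (ext ω) k i ≠ μ i then 1 else 0) +
      (if act π σ (ext ω) k i ≠ flipAt i μ i then 1 else 0) : ℝ) = 1 := fun k => by
    cases hμ : μ i <;> cases act π σ (ext ω) k i <;> simp [flipAt, hμ]
  rw [Finset.sum_congr rfl fun k _ => hone k]
  simp

lemma sum_coordMismatches_le (μ : Act d) (ω : Fin K → Bool) :
    ∑ i, coordMismatches π σ i μ ω ≤ d * K := by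
  calc ∑ i, coordMismatches π σ i μ ω ≤ ∑ _i : Fin d, ∑ _k : Fin K, (1 : ℝ) := by
        unfold coordMismatches
        gcongr with i _ k
        split_ifs <;> norm_num
    _ = d * K := by simp

lemma regret_eq_mul_sum_coordMismatches (hΔ : 0 ≤ Δ) (μ : Act d) (ω : Fin K → Bool) :
    regret d K Δ σ π μ ω = 2 * σ * Δ * ∑ i, coordMismatches π σ i μ ω := by
  simp only [regret, coordMismatches, maxRew_eq hΔ, ip_wvec_embed, hammingDist,
    Finset.card_filter, Finset.mul_sum]
  rw [Finset.sum_comm]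
  refine Finset.sum_congr rfl fun k _ => ?_
  push_cast
  rw [← Finset.mul_sum]
  ring

lemma sum_min_trajP_flipAt_ge (hΔ : 0 ≤ Δ) (hdΔ : d * Δ ≤ 1 / 12) (hKΔ : K * Δ ^ 2 ≤ 1 / 96)
    (i : Fin d) (μ : Act d) :
    961 / 2048 ≤
      ∑ ω : Fin K → Bool, min (trajP d K Δ σ π μ ω) (trajP d K Δ σ π (flipAt i μ) ω) := by
  have hBC := pow_le_sum_sqrt_trajP_mul_trajP_flipAt π (σ := σ) (K := K) hΔ hdΔ i μ
  have hBernoulli := one_add_mul_le_pow (a := -(3 * Δ ^ 2))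
    (by linarith [three_mul_sq_le_one i.pos hΔ hdΔ]) K
  have hLeCam := sq_sum_sqrt_mul_le_sum_min_mul (trajP_nonneg π (σ := σ) hΔ hdΔ μ)
    (trajP_nonneg π (σ := σ) (K := K) hΔ hdΔ (flipAt i μ))
  rw [Finset.sum_add_distrib, sum_trajP, sum_trajP] at hLeCam
  have hpos : (31 / 32 : ℝ) ≤ (1 - 3 * Δ ^ 2) ^ K := by
    rw [sub_eq_add_neg]; linarith
  nlinarith

lemma le_sum_trajP_mul_sum_coordMismatches (hΔ : 0 ≤ Δ) (hdΔ : d * Δ ≤ 1 / 12)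
    (hKΔ : K * Δ ^ 2 ≤ 1 / 96) :
    961 / 4096 * (d * K) * 2 ^ d ≤
      ∑ μ, ∑ ω : Fin K → Bool, trajP d K Δ σ π μ ω * ∑ i, coordMismatches π σ i μ ω := by
  have hcoord : ∀ i : Fin d, 2 ^ d * (961 / 2048 * K) ≤
      2 * ∑ μ, ∑ ω : Fin K → Bool, trajP d K Δ σ π μ ω * coordMismatches π σ i μ ω := fun i => by
    simpa using card_mul_le_two_mul_sum_mul_of_involutive (flipAt_involutive i) (K.cast_nonneg)
      (coordMismatches_nonneg π i) (coordMismatches_add_flipAt π i)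
      (sum_min_trajP_flipAt_ge π hΔ hdΔ hKΔ i)
  calc (961 / 4096 * (d * K) * 2 ^ d : ℝ)
      = ∑ _i : Fin d, (961 / 4096 * K * 2 ^ d : ℝ) := by
        rw [Finset.sum_const, Finset.card_univ, Fintype.card_fin, nsmul_eq_mul]; ring
    _ ≤ ∑ i, ∑ μ, ∑ ω : Fin K → Bool, trajP d K Δ σ π μ ω * coordMismatches π σ i μ ω :=
      Finset.sum_le_sum fun i _ => by linarith [hcoord i]
    _ = _ := by
      simp only [Finset.mul_sum]
      rw [Finset.sum_comm]
      exact Finset.sum_congr rfl fun μ _ => Finset.sum_comm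

end Regret

lemma le_sum_ite_trajP_regret_ge {d K : ℕ} {Δ σ : ℝ} (π : Alg d) (hσ : 0 < σ) (hΔ : 0 < Δ)
    (hdΔ : d * Δ ≤ 1 / 12) (hKΔ : K * Δ ^ 2 ≤ 1 / 96) (hdK : 0 < d * K) :
    449 / 4096 * 2 ^ d ≤ ∑ μ, ∑ ω : Fin K → Bool,
      if 2 * σ * Δ * (d * K / 8) ≤ regret d K Δ σ π μ ω then trajP d K Δ σ π μ ω else 0 := by
  have hdK' : (0 : ℝ) < d * K := by exact_mod_cast hdK
  have hevent : ∀ μ (ω : Fin K → Bool), 2 * σ * Δ * (d * K / 8) ≤ regret d K Δ σ π μ ω ↔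
      d * K / 8 ≤ ∑ i, coordMismatches π σ i μ ω := fun μ ω => by
    rw [regret_eq_mul_sum_coordMismatches π hΔ.le]
    exact mul_le_mul_iff_right₀ (by positivity)
  have hmarkov := sum_mul_le_mul_sum_ite_add (ι := Act d × (Fin K → Bool))
    (w := fun p => trajP d K Δ σ π p.1 p.2) (X := fun p => ∑ i, coordMismatches π σ i p.1 p.2)
    (by positivity : (0 : ℝ) ≤ d * K / 8) (fun p => trajP_nonneg π hΔ.le hdΔ p.1 p.2)
    (fun p => sum_coordMismatches_le π p.1 p.2)
  simp only [Fintype.sum_prod_type, sum_trajP, Finset.sum_const, Finset.card_univ,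
    Fintype.card_fun, Fintype.card_bool, Fintype.card_fin, nsmul_eq_mul, mul_one] at hmarkov
  have hmean := le_sum_trajP_mul_sum_coordMismatches π (σ := σ) hΔ.le hdΔ hKΔ
  simp only [hevent]
  push_cast at hmarkov
  nlinarith

lemma mul_sq_one_div_sqrt_mul {K : ℝ} (hK : 0 < K) : K * (1 / √(96 * K)) ^ 2 = 1 / 96 := by
  rw [div_pow, Real.sq_sqrt (by positivity)]
  field_simp

lemma mul_one_div_sqrt_mul_le {d K : ℝ} (hd : 0 ≤ d) (hK : 3 / 2 * d ^ 2 ≤ K) :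
    d * (1 / √(96 * K)) ≤ 1 / 12 := by
  have h12 : 12 * d ≤ √(96 * K) :=
    (Real.le_sqrt (by positivity) (by nlinarith)).2 (by nlinarith)
  rw [mul_one_div]
  exact div_le_of_le_mul₀ (Real.sqrt_nonneg _) (by norm_num) (by linarith)

lemma regret_threshold_eq {d K σ : ℝ} (hK : 0 < K) (hσ : 0 ≤ σ) :
    d * √(K * σ ^ 2) / (16 * √6) = 2 * σ * (1 / √(96 * K)) * (d * K / 8) := by
  have h96 : √(96 * K) = 4 * √6 * √K := by
    rw [show (96 : ℝ) * K = 4 ^ 2 * 6 * K by ring, Real.sqrt_mul (by positivity),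
      Real.sqrt_mul (by positivity), Real.sqrt_sq (by norm_num)]
  rw [Real.sqrt_mul hK.le, Real.sqrt_sq hσ, h96]
  have : 0 < √K := Real.sqrt_pos.2 hK
  field_simp
  rw [Real.sq_sqrt hK.le]
  ring

/-- there is a universal constant `c > 0` such that for every
`d ≥ 2`, every `K ≥ 1.5·d²` with `dK ≥ 3`, every `σ ∈ (0,1]` and every
deterministic algorithm `π` for the `K`-round hypercube instance, the
probability (over `μ` uniform on `{−Δ,Δ}^d`, `Δ = 1/√(96K)`, and the rewards)
that `Regret(K) ≥ d·√(K·σ²)/(16·√6)` is at least `c / log(dK)`. -/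
theorem constant_probability_regret_lower_bound :
    ∃ c : ℝ, 0 < c ∧
      ∀ (d K : ℕ) (σ : ℝ) (π : Alg d),
        2 ≤ d → (3 : ℝ) / 2 * (d : ℝ) ^ 2 ≤ (K : ℝ) → 3 ≤ d * K →
        0 < σ → σ ≤ 1 →
        c / Real.log ((d : ℝ) * (K : ℝ)) ≤
          probRegretGe d K σ
            ((d : ℝ) * Real.sqrt ((K : ℝ) * σ ^ 2) / (16 * Real.sqrt 6)) π := by
  refine ⟨1 / 10, by norm_num, fun d K σ π _ hKd hdK hσ _ => ?_⟩
  have hdK' : (3 : ℝ) ≤ d * K := by exact_mod_cast hdK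
  have hK : (0 : ℝ) < K := by
    have : 0 < K := Nat.pos_of_ne_zero fun h => by simp [h] at hdK
    exact_mod_cast this
  have hlog : 1 ≤ Real.log (d * K) := by
    rw [Real.le_log_iff_exp_le (by linarith)]
    linarith [Real.exp_one_lt_d9]
  have htail := le_sum_ite_trajP_regret_ge π hσ (by positivity)
    (mul_one_div_sqrt_mul_le d.cast_nonneg hKd) (mul_sq_one_div_sqrt_mul hK).le (by omega)
  have hprob : 449 / 4096 ≤ probRegretGe d K σ
      ((d : ℝ) * Real.sqrt ((K : ℝ) * σ ^ 2) / (16 * Real.sqrt 6)) π := by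
    rw [probRegretGe, regret_threshold_eq hK hσ.le, one_div_mul_eq_div,
      le_div_iff₀ (by positivity)]
    exact htail
  calc 1 / 10 / Real.log (d * K) ≤ 1 / 10 := div_le_self (by norm_num) hlog
    _ ≤ 449 / 4096 := by norm_num
    _ ≤ _ := hprob

end HypercubeBandit2
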